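/- For every integer k ≥ 0, ∫_{-1}^{1} (P_k'(t))^2 dt = k(k+1). -/
import Mathlib

open Polynomial intervalIntegral

lemma iteratedDeriv_polyeval (p : ℝ[X]) (n : ℕ) :
    iteratedDeriv n (fun x => p.eval x) = fun x => (derivative^[n] p).eval x := by
  induction n with
  | zero => simp
  | succ n ih =>
    rw [iteratedDeriv_succ, ih]
    funext x
    rw [Function.iterate_succ_apply', Polynomial.deriv]

lemma polyInt (p : ℝ[X]) : IntervalIntegrable (fun t => p.eval t) MeasureTheory.volume (-1:ℝ) 1 :=
  (p.continuous_aeval).intervalIntegrable _ _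

lemma parts (p r : ℝ[X]) :
    (∫ t in (-1:ℝ)..1, (derivative p).eval t * r.eval t) =
      (p.eval 1 * r.eval 1 - p.eval (-1) * r.eval (-1)) -
        ∫ t in (-1:ℝ)..1, p.eval t * (derivative r).eval t := by
  have h := integral_mul_deriv_eq_deriv_mul (u := fun t => p.eval t) (v := fun t => r.eval t)
    (u' := fun t => (derivative p).eval t) (v' := fun t => (derivative r).eval t)
    (a := (-1:ℝ)) (b := 1)
    (fun x _ => p.hasDerivAt x) (fun x _ => r.hasDerivAt x) (polyInt _) (polyInt _)
  linarith

lemma evalA (k j : ℕ) :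
    eval (1:ℝ) (derivative^[j] ((X - C 1:ℝ[X])^k)) = (k.descFactorial j : ℝ) * 0^(k-j) := by
  rw [iterate_derivative_X_sub_pow]
  simp [nsmul_eq_mul]

lemma evalA' (k j : ℕ) :
    eval (-1:ℝ) (derivative^[j] ((X - C 1:ℝ[X])^k)) = (k.descFactorial j : ℝ) * (-2)^(k-j) := by
  rw [iterate_derivative_X_sub_pow]
  simp [nsmul_eq_mul]
  norm_num

lemma evalB (k j : ℕ) :
    eval (1:ℝ) (derivative^[j] ((X + C 1:ℝ[X])^k)) = (k.descFactorial j : ℝ) * 2^(k-j) := by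
  rw [iterate_derivative_X_add_pow]
  simp [nsmul_eq_mul]
  norm_num

lemma evalB' (k j : ℕ) :
    eval (-1:ℝ) (derivative^[j] ((X + C 1:ℝ[X])^k)) = (k.descFactorial j : ℝ) * 0^(k-j) := by
  rw [iterate_derivative_X_add_pow]
  simp [nsmul_eq_mul]

lemma qfact (k : ℕ) : ((X:ℝ[X])^2 - C 1)^k = (X - C 1)^k * (X + C 1)^k := by
  rw [← mul_pow]; congr 1; ring_nf; simp

lemma ev1k (k : ℕ) :
    eval (1:ℝ) (derivative^[k] (((X:ℝ[X])^2 - C 1)^k)) = (k.factorial : ℝ) * 2^k := by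
  rw [qfact, Polynomial.iterate_derivative_mul, Polynomial.eval_finset_sum,
    Finset.sum_eq_single 0]
  · simp only [nsmul_eq_mul, eval_mul, eval_natCast]
    rw [evalA, evalB]
    simp only [Nat.sub_zero, Nat.sub_self, pow_zero, Nat.choose_zero_right,
      Nat.descFactorial_zero, Nat.descFactorial_self, Nat.cast_one]
    ring
  · intro i hi h0
    have hik : i ≤ k := Nat.lt_succ_iff.mp (Finset.mem_range.mp hi)
    simp only [nsmul_eq_mul, eval_mul, eval_natCast]
    rw [evalA, Nat.sub_sub_self hik, zero_pow h0]
    ring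
  · intro h; exact absurd (Finset.mem_range.mpr k.succ_pos) h

lemma ev1k1 (k : ℕ) :
    eval (1:ℝ) (derivative^[k+1] (((X:ℝ[X])^2 - C 1)^k)) =
      (k+1 : ℝ) * k.factorial * (k * 2^(k-1)) := by
  rw [qfact, Polynomial.iterate_derivative_mul, Polynomial.eval_finset_sum,
    Finset.sum_eq_single 1]
  · simp only [nsmul_eq_mul, eval_mul, eval_natCast]
    rw [evalA, evalB]
    simp only [Nat.add_sub_cancel, Nat.sub_self, pow_zero, Nat.choose_one_right,
      Nat.descFactorial_one, Nat.descFactorial_self]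
    push_cast
    ring
  · intro i hi h1
    have hik : i ≤ k + 1 := Nat.lt_succ_iff.mp (Finset.mem_range.mp hi)
    simp only [nsmul_eq_mul, eval_mul, eval_natCast]
    rcases Nat.eq_zero_or_pos i with h0 | h0
    · subst h0
      simp only [Nat.sub_zero]
      rw [evalA, Nat.descFactorial_eq_zero_iff_lt.2 (Nat.lt_succ_self k)]
      simp
    · have he : k - (k + 1 - i) = i - 1 := by omega
      rw [evalA, he, zero_pow (by omega : i - 1 ≠ 0)]
      ring
  · intro h; exact absurd (Finset.mem_range.mpr (by omega)) h

lemma ev2k (k : ℕ) :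
    eval (-1:ℝ) (derivative^[k] (((X:ℝ[X])^2 - C 1)^k)) = (k.factorial : ℝ) * (-2)^k := by
  rw [qfact, Polynomial.iterate_derivative_mul, Polynomial.eval_finset_sum,
    Finset.sum_eq_single k]
  · simp only [nsmul_eq_mul, eval_mul, eval_natCast]
    rw [evalA', evalB']
    simp only [Nat.sub_self, Nat.sub_zero, pow_zero, Nat.choose_self,
      Nat.descFactorial_zero, Nat.descFactorial_self, Nat.cast_one]
    ring
  · intro i hi h0
    have hik : i ≤ k := Nat.lt_succ_iff.mp (Finset.mem_range.mp hi)
    simp only [nsmul_eq_mul, eval_mul, eval_natCast]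
    rw [evalB', zero_pow (by omega : k - i ≠ 0)]
    ring
  · intro h; exact absurd (Finset.mem_range.mpr (Nat.lt_succ_self k)) h

lemma ev2k1 (k : ℕ) :
    eval (-1:ℝ) (derivative^[k+1] (((X:ℝ[X])^2 - C 1)^k)) =
      (k+1 : ℝ) * k.factorial * (k * (-2)^(k-1)) := by
  rw [qfact, Polynomial.iterate_derivative_mul, Polynomial.eval_finset_sum,
    Finset.sum_eq_single k]
  · simp only [nsmul_eq_mul, eval_mul, eval_natCast]
    rw [evalA', evalB']
    have : k + 1 - k = 1 := by omega
    rw [this]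
    simp only [Nat.sub_self, pow_zero, Nat.choose_succ_self_right,
      Nat.descFactorial_one, Nat.descFactorial_self]
    push_cast
    ring
  · intro i hi h1
    have hik : i ≤ k + 1 := Nat.lt_succ_iff.mp (Finset.mem_range.mp hi)
    simp only [nsmul_eq_mul, eval_mul, eval_natCast]
    rcases Nat.lt_or_ge i k with h0 | h0
    · rw [evalB', zero_pow (by omega : k - i ≠ 0)]
      ring
    · have : i = k + 1 := by omega
      subst this
      rw [evalB', Nat.descFactorial_eq_zero_iff_lt.2 (Nat.lt_succ_self k)]
      simp
  · intro h; exact absurd (Finset.mem_range.mpr (by omega)) h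

lemma vanish (k m : ℕ) (hm : m < k) (c : ℝ) (hc : c^2 = 1) :
    eval c (derivative^[m] (((X:ℝ[X])^2 - C 1)^k)) = 0 := by
  obtain ⟨r, hr⟩ := Polynomial.pow_sub_dvd_iterate_derivative_pow ((X:ℝ[X])^2 - C 1) k m
  rw [hr, eval_mul, eval_pow]
  have h0 : eval c ((X:ℝ[X])^2 - C 1) = 0 := by simp [hc]
  rw [h0, zero_pow (by omega : k - m ≠ 0), zero_mul]

lemma main_integral (k : ℕ) :
    (∫ t in (-1:ℝ)..1,
        (derivative^[k+1] (((X:ℝ[X])^2 - C 1)^k)).eval t *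
          (derivative^[k+1] (((X:ℝ[X])^2 - C 1)^k)).eval t) =
      eval 1 (derivative^[k] (((X:ℝ[X])^2 - C 1)^k)) *
          eval 1 (derivative^[k+1] (((X:ℝ[X])^2 - C 1)^k)) -
        eval (-1) (derivative^[k] (((X:ℝ[X])^2 - C 1)^k)) *
          eval (-1) (derivative^[k+1] (((X:ℝ[X])^2 - C 1)^k)) := by
  set q : ℝ[X] := ((X:ℝ[X])^2 - C 1)^k with hq
  set B : ℝ := eval 1 (derivative^[k] q) * eval 1 (derivative^[k+1] q) -
    eval (-1) (derivative^[k] q) * eval (-1) (derivative^[k+1] q) with hB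
  have key : ∀ m : ℕ, 1 ≤ m → m ≤ k + 1 →
      (∫ t in (-1:ℝ)..1, (derivative^[k+1] q).eval t * (derivative^[k+1] q).eval t) =
        B + (-1:ℝ)^m * ∫ t in (-1:ℝ)..1,
          (derivative^[k+1-m] q).eval t * (derivative^[k+1+m] q).eval t := by
    intro m hm
    induction m, hm using Nat.le_induction with
    | base =>
      intro _
      have h := parts (derivative^[k] q) (derivative^[k+1] q)
      simp only [← Function.iterate_succ_apply' derivative] at h
      simp only [Nat.add_sub_cancel]
      rw [h]; ring
    | succ m hm ih =>
      intro hle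
      have hmk : m ≤ k := by omega
      have ihm := ih (by omega)
      have h := parts (derivative^[k-m] q) (derivative^[k+1+m] q)
      simp only [← Function.iterate_succ_apply' derivative] at h
      have e1 : (k - m).succ = k + 1 - m := by omega
      have e2 : k + 1 - (m + 1) = k - m := by omega
      have e3 : (k + 1 + m).succ = k + 1 + (m + 1) := by omega
      rw [e1, e3] at h
      rw [vanish k (k-m) (by omega) 1 (by norm_num),
          vanish k (k-m) (by omega) (-1) (by norm_num)] at h
      rw [ihm, h, e2]
      ring_nf
  have hzero : derivative^[k+1+(k+1)] q = 0 := by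
    apply Polynomial.iterate_derivative_eq_zero
    calc q.natDegree ≤ k * ((X:ℝ[X])^2 - C 1).natDegree := Polynomial.natDegree_pow_le
    _ ≤ k * 2 := by
        gcongr
        apply (Polynomial.natDegree_sub_le _ _).trans
        simp [Polynomial.natDegree_C, Polynomial.natDegree_X_pow]
    _ < k + 1 + (k + 1) := by omega
  have := key (k+1) (by omega) (by omega)
  rw [hzero] at this
  simpa using this

theorem final_arith (k : ℕ) :
    (1 / (2 ^ k * (Nat.factorial k : ℝ)))^2 *
      ((k.factorial : ℝ) * 2^k * ((k+1 : ℝ) * k.factorial * (k * 2^(k-1))) -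
       (k.factorial : ℝ) * (-2)^k * ((k+1 : ℝ) * k.factorial * (k * (-2)^(k-1)))) =
      k * (k + 1) := by
  have hF : (k.factorial : ℝ) ≠ 0 := Nat.cast_ne_zero.mpr k.factorial_ne_zero
  have h2 : (2:ℝ)^k ≠ 0 := pow_ne_zero _ two_ne_zero
  cases k with
  | zero => norm_num
  | succ n =>
    simp only [Nat.add_sub_cancel]
    have h4 : ((-2:ℝ))^n * (-2)^n = 2^n * 2^n := by
      rw [← mul_pow, ← mul_pow]; norm_num
    have hne : ((2:ℝ)^(n+1) * ((n+1).factorial:ℝ))^2 ≠ 0 := by positivity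
    rw [div_pow, one_pow, div_mul_eq_mul_div, div_eq_iff hne]
    push_cast
    simp only [pow_succ]
    linear_combination (2*((n+1).factorial:ℝ)^2*((n:ℝ)+1+1)*((n:ℝ)+1)) * h4

/-- The classical Legendre polynomials via Rodrigues' formula. -/
noncomputable def legendreP (k : ℕ) : ℝ → ℝ :=
  fun t => (1 / (2 ^ k * (Nat.factorial k : ℝ))) *
    iteratedDeriv k (fun s : ℝ => (s ^ 2 - 1) ^ k) t

theorem legendre_deriv_sq_integral (k : ℕ) :
    (∫ t in (-1:ℝ)..1, (deriv (legendreP k) t) ^ 2) = k * (k + 1) := by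
  have hfun : (fun s : ℝ => (s^2 - 1)^k) = fun s => (((X:ℝ[X])^2 - C 1)^k).eval s := by
    funext s; simp
  have hL : legendreP k = fun t => (1 / (2 ^ k * (Nat.factorial k : ℝ))) *
      (derivative^[k] (((X:ℝ[X])^2 - C 1)^k)).eval t := by
    funext t
    simp only [legendreP]
    rw [hfun, iteratedDeriv_polyeval]
  have hderiv : ∀ t : ℝ, deriv (legendreP k) t = (1 / (2 ^ k * (Nat.factorial k : ℝ))) *
      (derivative^[k+1] (((X:ℝ[X])^2 - C 1)^k)).eval t := by
    intro t
    rw [hL]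
    have h1 : HasDerivAt (fun t : ℝ => (derivative^[k] (((X:ℝ[X])^2 - C 1)^k)).eval t)
        ((derivative^[k+1] (((X:ℝ[X])^2 - C 1)^k)).eval t) t := by
      have h := Polynomial.hasDerivAt (derivative^[k] (((X:ℝ[X])^2 - C 1)^k)) t
      simp only [← Function.iterate_succ_apply' derivative] at h
      exact h
    exact (h1.const_mul _).deriv
  have h1 : (∫ t in (-1:ℝ)..1, (deriv (legendreP k) t)^2)
      = ∫ t in (-1:ℝ)..1, (1 / (2 ^ k * (Nat.factorial k : ℝ)))^2 *
          ((derivative^[k+1] (((X:ℝ[X])^2 - C 1)^k)).eval t *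
           (derivative^[k+1] (((X:ℝ[X])^2 - C 1)^k)).eval t) := by
    apply intervalIntegral.integral_congr
    intro t _
    simp only [hderiv]; ring
  rw [h1, intervalIntegral.integral_const_mul, main_integral k, ev1k, ev1k1, ev2k, ev2k1]
  exact final_arith k
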